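/- arXiv:1507.03403 — 7 statements merged into one kernel-verified Lean document; each statement's English description precedes it below -/
import Mathlib

section
/- Let q_1, …, q_m be points in the plane ℝ² with m ≥ 3 whose x-coordinates are strictly increasing, and suppose there is an affine functional ℓ : ℝ² → ℝ with ℓ(q_1) = ℓ(q_m) = 0 and ℓ(q_k) > 0 for all 1 < k < m (i.e., all intermediate points lie strictly on one side of the line through q_1 and q_m). Then the closed polygon q_1 q_2 … q_m q_1 is simple; concretely: (i) for all indices a, c with 1 ≤ a, a + 2 ≤ c, and c + 1 ≤ m, the closed segments [q_a, q_{a+1}] and [q_c, q_{c+1}] are disjoint, and (ii) for all a with 2 ≤ a ≤ m − 2, the closed segment [q_a, q_{a+1}] is disjoint from the closed segment [q_1, q_m]. -/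
private lemma coord_mem {p r x : EuclideanSpace ℝ (Fin 2)}
    (hx : x ∈ segment ℝ p r) :
    ∃ u v : ℝ, 0 ≤ u ∧ 0 ≤ v ∧ u + v = 1 ∧ x 0 = u * p 0 + v * r 0 := by
  obtain ⟨u, v, hu, hv, huv, rfl⟩ := hx
  exact ⟨u, v, hu, hv, huv, by simp [PiLp.add_apply, PiLp.smul_apply, smul_eq_mul]⟩

/-- An x-monotone chain whose interior vertices lie strictly on one
side of the line through its endpoints, closed by the base edge, is a simple
polygon (a monotone mountain). -/
theorem monotone_mountain_is_simple
    (m : ℕ) (hm : 3 ≤ m) (q : ℕ → EuclideanSpace ℝ (Fin 2))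
    (hx : ∀ k, 1 ≤ k → k < m → q k 0 < q (k + 1) 0)
    (ℓ : EuclideanSpace ℝ (Fin 2) →ᵃ[ℝ] ℝ)
    (h1 : ℓ (q 1) = 0) (hmz : ℓ (q m) = 0)
    (hpos : ∀ k, 1 < k → k < m → 0 < ℓ (q k)) :
    (∀ a c, 1 ≤ a → a + 2 ≤ c → c + 1 ≤ m →
      Disjoint (segment ℝ (q a) (q (a + 1))) (segment ℝ (q c) (q (c + 1)))) ∧
    (∀ a, 2 ≤ a → a ≤ m - 2 →
      Disjoint (segment ℝ (q a) (q (a + 1))) (segment ℝ (q 1) (q m))) := by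
  -- strict monotonicity of x-coordinates on [1, m]
  have xlt : ∀ i j, 1 ≤ i → i < j → j ≤ m → q i 0 < q j 0 := by
    intro i j hi hij hjm
    induction j with
    | zero => omega
    | succ j ih =>
      rcases Nat.lt_or_ge i j with h | h
      · exact lt_trans (ih h (by omega)) (hx j (by omega) (by omega))
      · have : i = j := by omega
        subst this
        exact hx i hi (by omega)
  constructor
  · intro a c ha hac hcm
    rw [Set.disjoint_left]
    intro x hx1 hx2
    obtain ⟨u, v, hu, hv, huv, hxe⟩ := coord_mem hx1
    obtain ⟨s, t, hs, ht, hst, hxe'⟩ := coord_mem hx2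
    have h1' : q a 0 < q (a + 1) 0 := hx a ha (by omega)
    have h2' : q (a + 1) 0 < q c 0 := by
      rcases Nat.lt_or_ge (a + 1) c with h | h
      · exact xlt (a + 1) c (by omega) h (by omega)
      · omega
    have h3' : q c 0 < q (c + 1) 0 := hx c (by omega) (by omega)
    have e1 : u * q (a + 1) 0 + v * q (a + 1) 0 = q (a + 1) 0 := by
      rw [← add_mul, huv, one_mul]
    have e2 : s * q c 0 + t * q c 0 = q c 0 := by
      rw [← add_mul, hst, one_mul]
    have b1 : x 0 ≤ q (a + 1) 0 := by
      nlinarith [mul_le_mul_of_nonneg_left h1'.le hu]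
    have b2 : q c 0 ≤ x 0 := by
      nlinarith [mul_le_mul_of_nonneg_left h3'.le ht]
    linarith
  · intro a ha ham
    rw [Set.disjoint_left]
    intro x hx1 hx2
    have hℓ1 : ℓ x ∈ segment ℝ (ℓ (q a)) (ℓ (q (a + 1))) := by
      rw [← image_segment ℝ ℓ]; exact Set.mem_image_of_mem _ hx1
    have hℓ2 : ℓ x ∈ segment ℝ (ℓ (q 1)) (ℓ (q m)) := by
      rw [← image_segment ℝ ℓ]; exact Set.mem_image_of_mem _ hx2
    rw [h1, hmz, segment_same] at hℓ2
    have hpa : 0 < ℓ (q a) := hpos a (by omega) (by omega)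
    have hpa1 : 0 < ℓ (q (a + 1)) := hpos (a + 1) (by omega) (by omega)
    obtain ⟨u, v, hu, hv, huv, he⟩ := hℓ1
    simp only [smul_eq_mul] at he
    rw [Set.mem_singleton_iff] at hℓ2
    nlinarith [mul_pos (lt_of_le_of_ne hu (by nlinarith)) hpa]
end

section
/- Let m, r, r', b, d be natural numbers with r = 2r', r' ≥ 4, d ≤ 3, r ≤ m, and b + d ≤ m. Then, as real numbers, C(m − b − d, r − d) / C(m, r) ≤ 64 · exp(−(r·b)/(2m)) · C(m − b − d, r' − d) / C(m, r'). -/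
/-!
With `s = r'` and `n = m - b - d`, write `C(n, k) = n^(k) / k!` with falling factorials. The quotient
of the left-hand side by the probability for `r'`-subsets is then
`(m - s - b)^(s) / (m - s)^(s) · (2s)^(d) / s^(d)`. Each of the `s` factors
`(m - s - b - j) / (m - s - j)` of the first quotient is at most `1 - b/m ≤ e^(-b/m)`, and each of
the `d ≤ 3` factors `(2s - i) / (s - i)` of the second is at most `4`.
-/

open Nat Real

namespace Nat

theorem choose_sub_mul_factorial (n : ℕ) {d k : ℕ} (hd : d ≤ k) :
    n.choose (k - d) * k ! = n.descFactorial (k - d) * k.descFactorial d := by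
  rw [← factorial_mul_descFactorial hd, descFactorial_eq_factorial_mul_choose n]
  ring

theorem cast_choose_sub_div_choose {K : Type*} [Field K] [CharZero K] (n m : ℕ) {d k : ℕ}
    (hd : d ≤ k) :
    (n.choose (k - d) : K) / m.choose k =
      n.descFactorial (k - d) * k.descFactorial d / m.descFactorial k := by
  rw [← mul_div_mul_right _ _ (cast_ne_zero.2 k.factorial_ne_zero),
    descFactorial_eq_factorial_mul_choose m k, mul_comm (k ! : ℕ)]
  exact_mod_cast congrArg (fun x : ℕ => (x : K) / (m.choose k * k ! : ℕ))
    (choose_sub_mul_factorial n hd)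

theorem cast_sub_le_exp_neg_div_mul {x m : ℕ} (b : ℕ) (hx : x ≤ m) :
    ((x - b : ℕ) : ℝ) ≤ exp (-(b / m)) * x := by
  rcases le_or_gt b x with hbx | hxb
  · have hfrac : (b : ℝ) * x / m ≤ b :=
      div_le_of_le_mul₀ (cast_nonneg m) (cast_nonneg b)
        (mul_le_mul_of_nonneg_left (cast_le.2 hx) (cast_nonneg b))
    calc ((x - b : ℕ) : ℝ) ≤ (1 - b / m) * x := by
          rw [cast_sub hbx, sub_mul, one_mul, div_mul_eq_mul_div]
          linarith
      _ ≤ exp (-(b / m)) * x := by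
          gcongr
          linarith [add_one_le_exp (-(b / m : ℝ))]
  · rw [Nat.sub_eq_zero_of_le hxb.le, cast_zero]
    positivity

theorem cast_descFactorial_sub_le_exp_mul {c m : ℕ} (b s : ℕ) (hc : c ≤ m) :
    ((c - b).descFactorial s : ℝ) ≤ exp (-(s * b / m)) * c.descFactorial s := by
  induction s with
  | zero => simp
  | succ s ih =>
    rw [descFactorial_succ, descFactorial_succ, Nat.sub_right_comm, cast_mul, cast_mul]
    calc ((c - s - b : ℕ) : ℝ) * (c - b).descFactorial s
        ≤ (exp (-(b / m)) * (c - s : ℕ)) * (exp (-(s * b / m)) * c.descFactorial s) :=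
          mul_le_mul (cast_sub_le_exp_neg_div_mul b (by omega)) ih (by positivity) (by positivity)
      _ = exp (-((s + 1 : ℕ) * b / m)) * ((c - s : ℕ) * c.descFactorial s) := by
          rw [mul_mul_mul_comm, ← exp_add]
          push_cast
          ring_nf

theorem descFactorial_two_mul_le_four_pow_mul {s d : ℕ} (h : 3 * d ≤ 2 * s + 3) :
    (2 * s).descFactorial d ≤ 4 ^ d * s.descFactorial d := by
  induction d with
  | zero => simp
  | succ d ih =>
    rw [descFactorial_succ, descFactorial_succ, pow_succ]
    calc (2 * s - d) * (2 * s).descFactorial d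
        ≤ (4 * (s - d)) * (4 ^ d * s.descFactorial d) :=
          Nat.mul_le_mul (by omega) (ih (by omega))
      _ = _ := by ring

end Nat

theorem chazelle_friedman_choose_bound_general
    (m r r' b d : ℕ) (h2 : r = 2 * r') (hr' : 4 ≤ r') (hd : d ≤ 3)
    (hrm : r ≤ m) :
    (Nat.choose (m - b - d) (r - d) : ℝ) / (Nat.choose m r : ℝ) ≤
      64 * Real.exp (-((r : ℝ) * (b : ℝ)) / (2 * (m : ℝ))) *
        ((Nat.choose (m - b - d) (r' - d) : ℝ) / (Nat.choose m r' : ℝ)) := by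
  subst h2
  set n := m - b - d
  have hsplit_n : (m - r' - b).descFactorial r' * n.descFactorial (r' - d) =
      n.descFactorial (2 * r' - d) := by
    rw [show m - r' - b = n - (r' - d) by omega, ← descFactorial_mul_descFactorial
      (show r' - d ≤ 2 * r' - d by omega), show 2 * r' - d - (r' - d) = r' by omega]
  have hsplit_m : (m - r').descFactorial r' * m.descFactorial r' = m.descFactorial (2 * r') := by
    rw [← descFactorial_mul_descFactorial (show r' ≤ 2 * r' by omega),
      show 2 * r' - r' = r' by omega]
  have hpos : (0 : ℝ) < (m - r').descFactorial r' :=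
    cast_pos.2 (descFactorial_pos.2 (by omega))
  have hshift : ((m - r' - b).descFactorial r' : ℝ) / (m - r').descFactorial r' ≤
      exp (-(r' * b / m)) :=
    (div_le_iff₀ hpos).2 (cast_descFactorial_sub_le_exp_mul b r' (by omega))
  have hfactor : ((2 * r').descFactorial d : ℝ) ≤ 64 * r'.descFactorial d := by
    exact_mod_cast (descFactorial_two_mul_le_four_pow_mul (by omega)).trans
      (Nat.mul_le_mul_right _ (Nat.pow_le_pow_right (by norm_num) hd))
  rw [cast_choose_sub_div_choose _ _ (by omega), cast_choose_sub_div_choose _ _ (by omega : d ≤ r'),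
    ← hsplit_n, ← hsplit_m]
  push_cast
  calc _ = ((m - r' - b).descFactorial r' : ℝ) / (m - r').descFactorial r' *
        (2 * r').descFactorial d * (n.descFactorial (r' - d) / m.descFactorial r') := by
        field_simp
    _ ≤ exp (-(r' * b / m)) * (64 * r'.descFactorial d) *
        (n.descFactorial (r' - d) / m.descFactorial r') := by gcongr
    _ = _ := by
        rw [show -((2 * r' : ℝ) * b) / (2 * m) = -(r' * b / m) by ring]
        ring

/-- Combinatorial core of the Chazelle–Friedman bound: for
`r = 2r'` with `r' ≥ 4` and `d ≤ 3`, the probability that a uniformly random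
`r`-subset of an `m`-set contains a fixed `d`-subset and avoids a fixed
disjoint `b`-subset is at most `64 e^{-rb/(2m)}` times the corresponding
probability for an `r'`-subset. -/
theorem chazelle_friedman_choose_bound
    (m r r' b d : ℕ) (h2 : r = 2 * r') (hr' : 4 ≤ r') (hd : d ≤ 3)
    (hrm : r ≤ m) (hbd : b + d ≤ m) :
    (Nat.choose (m - b - d) (r - d) : ℝ) / (Nat.choose m r : ℝ) ≤
      64 * Real.exp (-((r : ℝ) * (b : ℝ)) / (2 * (m : ℝ))) *
        ((Nat.choose (m - b - d) (r' - d) : ℝ) / (Nat.choose m r' : ℝ)) :=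
  chazelle_friedman_choose_bound_general m r r' b d h2 hr' hd hrm
end

section
/- Let X ⊆ ℝ² be a finite set with |X| = m and let Y ⊆ ℝ² be a finite set with |Y| ≤ 3 and X ∩ Y = ∅. Let r, r' be natural numbers with r = 2r', r' ≥ 4, and r ≤ m. Let u be an affinely independent triple of points of X ∪ Y, with circumcenter c(u) and circumradius ρ(u); let B_u = {q ∈ X ∪ Y : dist(c(u), q) < ρ(u)} and b_u = |B_u|. Let R be a uniformly random r-element subset of X and R' a uniformly random r'-element subset of X. Then Pr[u ⊆ R ∪ Y and B_u ∩ (R ∪ Y) = ∅] ≤ 64 · exp(−(r·b_u)/(2m)) · Pr[u ⊆ R' ∪ Y and B_u ∩ (R' ∪ Y) = ∅]. -/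
open scoped Classical

/-!
If the conflict set `B` meets `Y`, the event is impossible. Otherwise `B ⊆ X`, and the event says
that the sample contains the `a ≤ 3` points of `u ∩ X` and avoids the `b` points of `B`; exactly
`C(N, n - a)` of the `n`-subsets of `X` do so, where `N = m - a - b`. The claim becomes
`C(N, 2k - a) / C(m, 2k) ≤ 64 e^{-kb/m} C(N, k - a) / C(m, k)`. The identities
`C(N, 2k-a) C(2k-a, k-a) = C(N, k-a) C(m-k-b, k)` and `C(m, 2k) C(2k, k) = C(m, k) C(m-k, k)`
write the ratio of the two sides as `(C(m-k-b, k) / C(m-k, k)) · (C(2k, k) / C(2k-a, k-a))`;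
the first factor is at most `(1 - b/m)^k ≤ e^{-kb/m}`, the second at most `4^a ≤ 64`.
-/

open Finset Real

theorem Nat.choose_succ_succ_le_mul_choose {n k c : ℕ} (h : n + 1 ≤ c * (k + 1)) :
    (n + 1).choose (k + 1) ≤ c * n.choose k := by
  refine Nat.le_of_mul_le_mul_right ?_ k.succ_pos
  calc (n + 1).choose (k + 1) * (k + 1) = (n + 1) * n.choose k :=
        (Nat.add_one_mul_choose_eq n k).symm
    _ ≤ c * (k + 1) * n.choose k := Nat.mul_le_mul_right _ h
    _ = c * n.choose k * (k + 1) := by ring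

theorem Nat.choose_two_mul_le_four_pow_mul_choose {k a : ℕ} (hak : a ≤ k)
    (h : 3 * a ≤ 2 * k + 3) :
    (2 * k).choose k ≤ 4 ^ a * (2 * k - a).choose (k - a) := by
  induction a with
  | zero => simp
  | succ t ih =>
    have step : (2 * k - t).choose (k - t) ≤ 4 * (2 * k - (t + 1)).choose (k - (t + 1)) := by
      rw [show 2 * k - t = 2 * k - (t + 1) + 1 by omega, show k - t = k - (t + 1) + 1 by omega]
      exact Nat.choose_succ_succ_le_mul_choose (by omega)
    calc (2 * k).choose k ≤ 4 ^ t * (2 * k - t).choose (k - t) := ih (by omega) (by omega)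
      _ ≤ 4 ^ t * (4 * (2 * k - (t + 1)).choose (k - (t + 1))) := Nat.mul_le_mul_left _ step
      _ = 4 ^ (t + 1) * (2 * k - (t + 1)).choose (k - (t + 1)) := by ring

theorem Nat.choose_sub_mul_pow_le {M m : ℕ} (b : ℕ) (hMm : M ≤ m) (j : ℕ) :
    (M - b).choose j * m ^ j ≤ M.choose j * (m - b) ^ j := by
  induction j with
  | zero => simp
  | succ j ih =>
    -- each factor `(M - b - j) / (M - j)` of the ratio is at most `(m - b) / m`
    have factor : (M - b - j) * m ≤ (M - j) * (m - b) := by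
      rcases le_or_gt M (b + j) with h | h
      · simp [show M - b - j = 0 by omega]
      · rw [Nat.sub_sub]
        zify [h.le, show b ≤ m by omega, show j ≤ M by omega]
        nlinarith
    refine Nat.le_of_mul_le_mul_right ?_ j.succ_pos
    calc (M - b).choose (j + 1) * m ^ (j + 1) * (j + 1)
        = (M - b).choose j * m ^ j * ((M - b - j) * m) := by
          rw [mul_right_comm, Nat.choose_succ_right_eq]; ring
      _ ≤ M.choose j * (m - b) ^ j * ((M - j) * (m - b)) := Nat.mul_le_mul ih factor
      _ = M.choose (j + 1) * (m - b) ^ (j + 1) * (j + 1) := by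
          rw [mul_right_comm _ _ (j + 1), Nat.choose_succ_right_eq]; ring

theorem choose_sub_le_exp_mul_choose {M m : ℕ} (b j : ℕ) (hMm : M ≤ m) (hbm : b ≤ m)
    (hm : 0 < m) : ((M - b).choose j : ℝ) ≤ exp (-(j * b) / m) * M.choose j := by
  have hm' : (0 : ℝ) < m := by exact_mod_cast hm
  have hcast : ((M - b).choose j : ℝ) * m ^ j ≤ M.choose j * (m - b) ^ j := by
    exact_mod_cast Nat.choose_sub_mul_pow_le b hMm j
  have hlin : (m : ℝ) - b ≤ m * exp (-(b / m)) := by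
    have := one_sub_le_exp_neg (b / m : ℝ)
    rw [mul_comm, ← div_le_iff₀ hm', sub_div, div_self hm'.ne']
    exact this
  have hsub : (0 : ℝ) ≤ m - b := by
    rw [sub_nonneg]; exact_mod_cast hbm
  rw [← mul_le_mul_iff_left₀ (pow_pos hm' j)]
  calc ((M - b).choose j : ℝ) * m ^ j ≤ M.choose j * (m - b) ^ j := hcast
    _ ≤ M.choose j * (m * exp (-(b / m))) ^ j := by gcongr
    _ = exp (-(j * b) / m) * M.choose j * m ^ j := by
      rw [mul_pow, ← exp_nat_mul]; ring_nf

theorem choose_two_mul_mul_choose_le {m k a b : ℕ} (ha : a ≤ 3) (hk : 3 ≤ k)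
    (hm : 2 * k + b ≤ m) :
    ((m - a - b).choose (2 * k - a) : ℝ) * m.choose k ≤
      64 * exp (-(k * b) / m) * (m - a - b).choose (k - a) * m.choose (2 * k) := by
  set N := m - a - b
  set E := exp (-(k * b) / m)
  have hN : (N.choose (2 * k - a) : ℝ) * (2 * k - a).choose (k - a) =
      N.choose (k - a) * (m - k - b).choose k := by
    have := Nat.choose_mul (n := N) (k := 2 * k - a) (s := k - a) (by omega)
    rw [show N - (k - a) = m - k - b by omega, show 2 * k - a - (k - a) = k by omega] at this
    exact_mod_cast this
  have hm2 : (m.choose (2 * k) : ℝ) * (2 * k).choose k = m.choose k * (m - k).choose k := by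
    have := Nat.choose_mul (n := m) (k := 2 * k) (s := k) (by omega)
    rw [show 2 * k - k = k by omega] at this
    exact_mod_cast this
  have hcentral : ((2 * k).choose k : ℝ) ≤ 64 * (2 * k - a).choose (k - a) := by
    have h4 : 4 ^ a ≤ 64 := (Nat.pow_le_pow_right (by norm_num) ha).trans_eq (by norm_num)
    exact_mod_cast (Nat.choose_two_mul_le_four_pow_mul_choose (by omega) (by omega)).trans
      (Nat.mul_le_mul_right _ h4)
  have hexp : ((m - k - b).choose k : ℝ) ≤ E * (m - k).choose k :=
    choose_sub_le_exp_mul_choose b k (by omega) (by omega) (by omega)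
  have hpos : (0 : ℝ) < (2 * k - a).choose (k - a) * (2 * k).choose k := by
    have := Nat.choose_pos (show k - a ≤ 2 * k - a by omega)
    have := Nat.choose_pos (show k ≤ 2 * k by omega)
    positivity
  refine le_of_mul_le_mul_right ?_ hpos
  calc (N.choose (2 * k - a) : ℝ) * m.choose k * ((2 * k - a).choose (k - a) * (2 * k).choose k)
      = N.choose (k - a) * m.choose k * (m - k - b).choose k * (2 * k).choose k := by
        linear_combination (m.choose k * (2 * k).choose k : ℝ) * hN
    _ ≤ N.choose (k - a) * m.choose k * (E * (m - k).choose k) *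
          (64 * (2 * k - a).choose (k - a)) := by gcongr
    _ = 64 * E * N.choose (k - a) * m.choose (2 * k) *
          ((2 * k - a).choose (k - a) * (2 * k).choose k) := by
        linear_combination (-64 * E * N.choose (k - a) * (2 * k - a).choose (k - a) : ℝ) * hm2

theorem choose_two_mul_div_choose_le (m k a b : ℕ) (ha : a ≤ 3) (hk : 3 ≤ k) :
    ((m - a - b).choose (2 * k - a) : ℝ) / m.choose (2 * k) ≤
      64 * exp (-(k * b) / m) * ((m - a - b).choose (k - a) / m.choose k) := by
  rcases lt_or_ge m (2 * k + b) with hm | hm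
  · rw [Nat.choose_eq_zero_of_lt (by omega), Nat.cast_zero, zero_div]
    positivity
  have hpos : ∀ n ≤ m, (0 : ℝ) < m.choose n := fun n hn => by exact_mod_cast Nat.choose_pos hn
  rw [div_le_iff₀ (hpos _ (by omega)), mul_div_assoc', div_mul_eq_mul_div,
    le_div_iff₀ (hpos _ (by omega))]
  exact choose_two_mul_mul_choose_le ha hk hm

theorem card_filter_powersetCard_subset_disjoint {α : Type*} [DecidableEq α] {A B X : Finset α}
    (n : ℕ) (hAX : A ⊆ X) (hBX : B ⊆ X) (hAB : Disjoint A B) (hAn : #A ≤ n) :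
    #{R ∈ X.powersetCard n | A ⊆ R ∧ Disjoint R B} = (#X - #A - #B).choose (n - #A) := by
  have : {R ∈ X.powersetCard n | A ⊆ R ∧ Disjoint R B} =
      {R ∈ (X \ B).powersetCard n | A ⊆ R} := by
    ext R
    simp only [mem_filter, mem_powersetCard, subset_sdiff]
    tauto
  rw [this, card_filter_powersetCard_subset _ _ _ (subset_sdiff.2 ⟨hAX, hAB⟩) hAn,
    card_sdiff_of_subset hBX, Nat.sub_right_comm]

theorem subset_union_and_inter_union_eq_empty_iff {α : Type*} [DecidableEq α]
    {X Y u B R : Finset α} (hXY : Disjoint X Y) (huXY : u ⊆ X ∪ Y) (hBY : Disjoint B Y) :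
    u ⊆ R ∪ Y ∧ B ∩ (R ∪ Y) = ∅ ↔ u ∩ X ⊆ R ∧ Disjoint R B := by
  simp only [subset_iff, ← disjoint_iff_inter_eq_empty, disjoint_left, mem_union, mem_inter]
    at hXY huXY hBY ⊢
  grind

theorem chazelle_friedman_voronoi_general
    (X Y : Finset (EuclideanSpace ℝ (Fin 2))) (m r r' : ℕ)
    (hX : X.card = m) (hXY : X ∩ Y = ∅)
    (h2 : r = 2 * r') (hr' : 4 ≤ r')
    (u : Finset (EuclideanSpace ℝ (Fin 2))) (hu3 : u.card = 3)
    (huXY : u ⊆ X ∪ Y)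
    (c : EuclideanSpace ℝ (Fin 2)) (ρ : ℝ) (hc : ∀ q ∈ u, dist c q = ρ) :
    (((X.powersetCard r).filter (fun R => u ⊆ R ∪ Y ∧
        ((X ∪ Y).filter (fun q => dist c q < ρ)) ∩ (R ∪ Y) = ∅)).card : ℝ) /
      ((X.powersetCard r).card : ℝ)
    ≤ 64 * Real.exp (-((r : ℝ) *
          (((X ∪ Y).filter (fun q => dist c q < ρ)).card : ℝ)) / (2 * (m : ℝ))) *
      ((((X.powersetCard r').filter (fun R => u ⊆ R ∪ Y ∧
          ((X ∪ Y).filter (fun q => dist c q < ρ)) ∩ (R ∪ Y) = ∅)).card : ℝ) /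
        ((X.powersetCard r').card : ℝ)) := by
  set B := (X ∪ Y).filter (fun q => dist c q < ρ)
  by_cases hBY : Disjoint B Y
  swap
  · have hempty (R : Finset _) : ¬ B ∩ (R ∪ Y) = ∅ := fun h =>
      hBY ((disjoint_iff_inter_eq_empty.2 h).mono_right subset_union_right)
    simp only [hempty, and_false, filter_false, card_empty, Nat.cast_zero, zero_div]
    positivity
  have hBX : B ⊆ X := fun q hq =>
    (mem_union.1 (mem_filter.1 hq).1).resolve_right (disjoint_left.1 hBY hq)
  have hAB : Disjoint (u ∩ X) B := disjoint_left.2 fun q hqA hqB =>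
    (mem_filter.1 hqB).2.ne (hc q (mem_inter.1 hqA).1)
  have ha : #(u ∩ X) ≤ 3 := hu3 ▸ card_le_card inter_subset_left
  have hcount (n : ℕ) (hn : #(u ∩ X) ≤ n) :
      #{R ∈ X.powersetCard n | u ⊆ R ∪ Y ∧ B ∩ (R ∪ Y) = ∅} =
        (m - #(u ∩ X) - #B).choose (n - #(u ∩ X)) := by
    rw [filter_congr fun R _ => subset_union_and_inter_union_eq_empty_iff
      (disjoint_iff_inter_eq_empty.2 hXY) huXY hBY,
      card_filter_powersetCard_subset_disjoint n inter_subset_right hBX hAB hn, hX]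
  rw [hcount r (by omega), hcount r' (by omega), card_powersetCard, card_powersetCard, hX, h2]
  convert choose_two_mul_div_choose_le m r' _ _ ha (by omega) using 4
  push_cast
  ring

/-- Chazelle–Friedman bound (Lemma 4 of the paper). For a random
`r`-subset `R` of `X` and a random `r'`-subset `R'` (with `r = 2r'`), the
probability that the circumcenter of an affinely independent triple
`u ⊆ X ∪ Y` is a Voronoi vertex of `R ∪ Y` (i.e. `u ⊆ R ∪ Y` and the conflict
set of `u` avoids `R ∪ Y`) is at most `64 e^{-r b_u/(2m)}` times the same
probability for `R' ∪ Y`. Probabilities for a uniformly random `r`-subset are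
expressed as counting ratios over `X.powersetCard r`. -/
theorem chazelle_friedman_voronoi
    (X Y : Finset (EuclideanSpace ℝ (Fin 2))) (m r r' : ℕ)
    (hX : X.card = m) (hY : Y.card ≤ 3) (hXY : X ∩ Y = ∅)
    (h2 : r = 2 * r') (hr' : 4 ≤ r') (hrm : r ≤ m)
    (u : Finset (EuclideanSpace ℝ (Fin 2))) (hu3 : u.card = 3)
    (huXY : u ⊆ X ∪ Y)
    (hind : AffineIndependent ℝ (fun x : u => (x : EuclideanSpace ℝ (Fin 2))))
    (c : EuclideanSpace ℝ (Fin 2)) (ρ : ℝ) (hc : ∀ q ∈ u, dist c q = ρ) :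
    (((X.powersetCard r).filter (fun R => u ⊆ R ∪ Y ∧
        ((X ∪ Y).filter (fun q => dist c q < ρ)) ∩ (R ∪ Y) = ∅)).card : ℝ) /
      ((X.powersetCard r).card : ℝ)
    ≤ 64 * Real.exp (-((r : ℝ) *
          (((X ∪ Y).filter (fun q => dist c q < ρ)).card : ℝ)) / (2 * (m : ℝ))) *
      ((((X.powersetCard r').filter (fun R => u ⊆ R ∪ Y ∧
          ((X ∪ Y).filter (fun q => dist c q < ρ)) ∩ (R ∪ Y) = ∅)).card : ℝ) /
        ((X.powersetCard r').card : ℝ)) :=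
  chazelle_friedman_voronoi_general X Y m r r' hX hXY h2 hr' u hu3 huXY c ρ hc
end

section
/- Let B ⊆ ℝ² be a finite set with |B| = m, let r, r' be natural numbers with r = 2r', r' ≥ 4, and r ≤ m, and let β ≥ 0 be a real number. For an affinely independent triple u of points of B, let b'_u = |{q ∈ B : dist(c(u), q) < ρ(u)}|, and say u is active in W if u ⊆ W and {q ∈ B : dist(c(u), q) < ρ(u)} ∩ W = ∅. Let R be a uniformly random r-element subset of B and R' a uniformly random r'-element subset of B. Then E[ number of affinely independent triples u ⊆ B with b'_u ≥ β that are active in R ] ≤ 64 · exp(−(r·β)/(2m)) · E[ number of affinely independent triples u ⊆ B active in R' ]. -/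
/-!
Double counting turns both expectations into sums over triples `u` of the probability that a
random sample contains `u` and avoids its conflict set `F_u`; for an `s`-sample of the `m`
points this is `C(m-3-b, s-3) / C(m, s)` with `b = |F_u|`. Comparing `s = 2k` with `s = k`
through `C(n, 2k-3) C(2k-3, k-3) = C(n, k-3) C(n-k+3, k)` and
`C(m, 2k) C(2k, k) = C(m, k) C(m-k, k)`, the ratio of the two probabilities is the product of
`C(m-k-b, k) / C(m-k, k) ≤ e^{-kb/m}` and `C(2k, k) / C(2k-3, k-3) ≤ 20`, and heavy triples
have `b ≥ β`.
-/

open scoped Classical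

open Finset Real

theorem Finset.card_filter_powersetCard_superset_disjoint {α : Type*} {B u F : Finset α} {s : ℕ}
    (huB : u ⊆ B) (hFB : F ⊆ B) (hFu : Disjoint F u) (hus : #u ≤ s) :
    #{R ∈ B.powersetCard s | u ⊆ R ∧ Disjoint F R} = (#B - #u - #F).choose (s - #u) := by
  have hcard : #(B \ (u ∪ F)) = #B - #u - #F := by
    rw [card_sdiff_of_subset (union_subset huB hFB), card_union_of_disjoint hFu.symm]
    omega
  have hdisj {S : Finset α} (hS : S ⊆ B \ (u ∪ F)) : Disjoint S u ∧ Disjoint F S :=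
    ⟨disjoint_of_subset_left hS (sdiff_disjoint.mono_right subset_union_left),
      (disjoint_of_subset_left hS (sdiff_disjoint.mono_right subset_union_right)).symm⟩
  rw [← hcard, ← card_powersetCard]
  refine card_bij' (fun R _ => R \ u) (fun S _ => S ∪ u) ?_ ?_ ?_ ?_
  · simp only [mem_filter, mem_powersetCard, and_imp]
    intro R hRB hRs huR hFR
    refine ⟨fun x hx => ?_, by rw [card_sdiff_of_subset huR, hRs]⟩
    simp only [mem_sdiff, mem_union] at hx ⊢
    exact ⟨hRB hx.1, by rintro (h | h); exacts [hx.2 h, disjoint_left.mp hFR h hx.1]⟩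
  · simp only [mem_filter, mem_powersetCard, and_imp]
    intro S hSB hSs
    refine ⟨⟨union_subset (hSB.trans sdiff_subset) huB, ?_⟩, subset_union_right,
      disjoint_union_right.mpr ⟨(hdisj hSB).2, hFu⟩⟩
    rw [card_union_of_disjoint (hdisj hSB).1, hSs]
    omega
  · intro R hR
    exact sdiff_union_of_subset (mem_filter.mp hR).2.1
  · intro S hS
    exact union_sdiff_cancel_right (hdisj (mem_powersetCard.mp hS).1).1

theorem Finset.sum_card_filter_and {α β : Type*} (s : Finset α) (t : Finset β) (P : α → Prop)
    (C : α → β → Prop) [DecidablePred P] [∀ a b, Decidable (C a b)] :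
    ∑ b ∈ t, #{a ∈ s | P a ∧ C a b} = ∑ a ∈ s with P a, #{b ∈ t | C a b} := by
  simp only [card_filter, sum_filter, ite_and]
  rw [sum_comm]
  exact sum_congr rfl fun a _ => by split_ifs <;> simp

theorem Nat.choose_le_exp_mul_choose_succ {M N : ℕ} (k : ℕ) (hMN : M + 1 ≤ N) :
    (M.choose k : ℝ) ≤ exp (-(k / N)) * (M + 1).choose k := by
  rcases lt_or_ge (M + 1) k with hk | hk
  · rw [Nat.choose_eq_zero_of_lt (by omega : M < k), Nat.cast_zero]
    positivity
  have hN : (0 : ℝ) < N := by exact_mod_cast (by omega : 0 < N)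
  have hsucc : (M.choose k : ℝ) * (M + 1) = (M + 1).choose k * ((M + 1 : ℝ) - k) := by
    have := congrArg (Nat.cast : ℕ → ℝ) (Nat.choose_mul_succ_eq M k)
    push_cast [Nat.cast_sub hk] at this
    exact this
  have hfactor : (M + 1 : ℝ) - k ≤ (M + 1) * exp (-(k / N)) := by
    have hMN' : (M + 1 : ℝ) ≤ N := by exact_mod_cast hMN
    have hscaled : (M + 1 : ℝ) * (k / N) ≤ k := by
      rw [mul_div_assoc', div_le_iff₀ hN]; nlinarith [(Nat.cast_nonneg k : (0 : ℝ) ≤ k)]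
    nlinarith [add_one_le_exp (-(k / N))]
  refine le_of_mul_le_mul_right ?_ (by positivity : (0 : ℝ) < M + 1)
  calc (M.choose k : ℝ) * (M + 1) = (M + 1).choose k * ((M + 1 : ℝ) - k) := hsucc
    _ ≤ (M + 1).choose k * ((M + 1) * exp (-(k / N))) := by gcongr
    _ = exp (-(k / N)) * (M + 1).choose k * (M + 1) := by ring

theorem Nat.choose_sub_le_exp_mul_choose (N k b : ℕ) :
    ((N - b).choose k : ℝ) ≤ exp (-(k * b / N)) * N.choose k := by
  induction b with
  | zero => simp
  | succ b ih =>
    rcases lt_or_ge b N with hb | hb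
    · have hstep := Nat.choose_le_exp_mul_choose_succ k (by omega : N - (b + 1) + 1 ≤ N)
      rw [(by omega : N - (b + 1) + 1 = N - b)] at hstep
      calc ((N - (b + 1)).choose k : ℝ) ≤ exp (-(k / N)) * (N - b).choose k := hstep
        _ ≤ exp (-(k / N)) * (exp (-(k * b / N)) * N.choose k) := by gcongr
        _ = exp (-(k * (b + 1 : ℕ) / N)) * N.choose k := by
          rw [← mul_assoc, ← exp_add]; push_cast; ring_nf
    · rcases k.eq_zero_or_pos with rfl | hk
      · simp
      rw [Nat.sub_eq_zero_of_le (by omega), Nat.choose_eq_zero_of_lt hk, Nat.cast_zero]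
      positivity

theorem Nat.choose_two_mul_le {k : ℕ} (hk : 3 ≤ k) :
    (2 * k).choose k ≤ 20 * (2 * k - 3).choose (k - 3) := by
  obtain ⟨j, rfl⟩ : ∃ j, k = j + 3 := ⟨k - 3, by omega⟩
  rw [(by omega : 2 * (j + 3) - 3 = 2 * j + 3), (by omega : j + 3 - 3 = j),
    (by omega : 2 * (j + 3) = 2 * j + 6)]
  have h1 : (2 * j + 6) * (2 * j + 5).choose (j + 2) = (2 * j + 6).choose (j + 3) * (j + 3) :=
    Nat.add_one_mul_choose_eq _ _
  have h2 : (2 * j + 5) * (2 * j + 4).choose (j + 1) = (2 * j + 5).choose (j + 2) * (j + 2) :=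
    Nat.add_one_mul_choose_eq _ _
  have h3 : (2 * j + 4) * (2 * j + 3).choose j = (2 * j + 4).choose (j + 1) * (j + 1) :=
    Nat.add_one_mul_choose_eq _ _
  have hratio : (2 * j + 6).choose (j + 3) * ((j + 3) * (j + 2) * (j + 1))
      = (2 * j + 3).choose j * ((2 * j + 6) * (2 * j + 5) * (2 * j + 4)) := by
    calc _ = (2 * j + 6).choose (j + 3) * (j + 3) * ((j + 2) * (j + 1)) := by ring
      _ = (2 * j + 6) * ((2 * j + 5).choose (j + 2) * (j + 2)) * (j + 1) := by rw [← h1]; ring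
      _ = (2 * j + 6) * (2 * j + 5) * ((2 * j + 4).choose (j + 1) * (j + 1)) := by rw [← h2]; ring
      _ = _ := by rw [← h3]; ring
  have hfactor :
      (2 * j + 6) * (2 * j + 5) * (2 * j + 4) ≤ 20 * ((j + 3) * (j + 2) * (j + 1)) := by
    ring_nf
    nlinarith [Nat.zero_le (j ^ 3), Nat.zero_le (j ^ 2)]
  refine Nat.le_of_mul_le_mul_right ?_ (by positivity : 0 < (j + 3) * (j + 2) * (j + 1))
  calc _ = (2 * j + 3).choose j * ((2 * j + 6) * (2 * j + 5) * (2 * j + 4)) := hratio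
    _ ≤ (2 * j + 3).choose j * (20 * ((j + 3) * (j + 2) * (j + 1))) := by gcongr
    _ = _ := by ring

theorem Nat.choose_two_mul_sub_three_div_le {m k : ℕ} (b : ℕ) (hk : 3 ≤ k)
    (hkm : 2 * k ≤ m) :
    ((m - 3 - b).choose (2 * k - 3) : ℝ) / m.choose (2 * k)
      ≤ 20 * exp (-(k * b / m)) * ((m - 3 - b).choose (k - 3) / m.choose k) := by
  set n := m - 3 - b
  have hsplit_n : n.choose (2 * k - 3) * (2 * k - 3).choose (k - 3)
      = n.choose (k - 3) * (m - k - b).choose k := by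
    rw [Nat.choose_mul (by omega), (by omega : n - (k - 3) = m - k - b),
      (by omega : 2 * k - 3 - (k - 3) = k)]
  have hsplit_m : m.choose (2 * k) * (2 * k).choose k = m.choose k * (m - k).choose k := by
    rw [Nat.choose_mul (by omega), (by omega : 2 * k - k = k)]
  have hg : (0 : ℝ) < (2 * k - 3).choose (k - 3) := by exact_mod_cast Nat.choose_pos (by omega)
  have hh : (0 : ℝ) < (2 * k).choose k := by exact_mod_cast Nat.choose_pos (by omega)
  have hY : (0 : ℝ) < (m - k).choose k := by exact_mod_cast Nat.choose_pos (by omega)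
  have hQ : (0 : ℝ) < m.choose k := by exact_mod_cast Nat.choose_pos (by omega)
  have hthin : ((m - k - b).choose k : ℝ) ≤ exp (-(k * b / m)) * (m - k).choose k := by
    refine (Nat.choose_sub_le_exp_mul_choose (m - k) k b).trans ?_
    gcongr
    · exact_mod_cast (by omega : 0 < m - k)
    · exact Nat.sub_le m k
  have hcentral : ((2 * k).choose k : ℝ) ≤ 20 * (2 * k - 3).choose (k - 3) := by
    exact_mod_cast Nat.choose_two_mul_le hk
  have hnum : (n.choose (2 * k - 3) : ℝ)
      = n.choose (k - 3) * (m - k - b).choose k / (2 * k - 3).choose (k - 3) :=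
    eq_div_of_mul_eq hg.ne' (by exact_mod_cast hsplit_n)
  have hden : (m.choose (2 * k) : ℝ) = m.choose k * (m - k).choose k / (2 * k).choose k :=
    eq_div_of_mul_eq hh.ne' (by exact_mod_cast hsplit_m)
  rw [hnum, hden]
  calc _ = (n.choose (k - 3) / m.choose k : ℝ) * ((m - k - b).choose k / (m - k).choose k)
        * ((2 * k).choose k / (2 * k - 3).choose (k - 3)) := by
        field_simp
    _ ≤ (n.choose (k - 3) / m.choose k : ℝ) * exp (-(k * b / m)) * 20 := by
        gcongr
        · exact (div_le_iff₀ hY).2 hthin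
        · exact (div_le_iff₀ hg).2 hcentral
    _ = _ := by ring

theorem card_filter_superset_disjoint_div_le {α : Type*} {B u F : Finset α} {k : ℕ}
    (huB : u ⊆ B) (hu : #u = 3) (hFB : F ⊆ B) (hk : 3 ≤ k) (hkB : 2 * k ≤ #B) :
    (#{R ∈ B.powersetCard (2 * k) | u ⊆ R ∧ Disjoint F R} : ℝ) / #(B.powersetCard (2 * k))
      ≤ 20 * exp (-(k * #F / #B)) *
        (#{R ∈ B.powersetCard k | u ⊆ R ∧ Disjoint F R} / #(B.powersetCard k)) := by
  by_cases hFu : Disjoint F u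
  · rw [card_powersetCard, card_powersetCard,
      card_filter_powersetCard_superset_disjoint huB hFB hFu (by omega),
      card_filter_powersetCard_superset_disjoint huB hFB hFu (by omega), hu]
    exact Nat.choose_two_mul_sub_three_div_le #F hk hkB
  · rw [filter_false_of_mem fun R _ hR => hFu (hR.2.mono_right hR.1), card_empty,
      Nat.cast_zero, zero_div]
    positivity

theorem sum_card_heavy_active_div_le {α : Type*} (B : Finset α) (P : Finset α → Prop)
    (F : Finset α → Finset α) (hFB : ∀ u, F u ⊆ B) (β : ℝ) {k : ℕ} (hk : 3 ≤ k)
    (hkB : 2 * k ≤ #B) :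
    (∑ R ∈ B.powersetCard (2 * k),
        (#{u ∈ B.powersetCard 3 | P u ∧ β ≤ #(F u) ∧ u ⊆ R ∧ Disjoint (F u) R} : ℝ)) /
        #(B.powersetCard (2 * k))
      ≤ 20 * exp (-(k * β / #B)) *
        ((∑ R ∈ B.powersetCard k,
          (#{u ∈ B.powersetCard 3 | P u ∧ u ⊆ R ∧ Disjoint (F u) R} : ℝ)) /
          #(B.powersetCard k)) := by
  have hheavy := sum_card_filter_and (B.powersetCard 3) (B.powersetCard (2 * k))
    (fun u => P u ∧ β ≤ #(F u)) (fun u R => u ⊆ R ∧ Disjoint (F u) R)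
  have hall := sum_card_filter_and (B.powersetCard 3) (B.powersetCard k) P
    (fun u R => u ⊆ R ∧ Disjoint (F u) R)
  simp only [and_assoc] at hheavy hall
  rw [← Nat.cast_sum, hheavy, ← Nat.cast_sum, hall, Nat.cast_sum, Nat.cast_sum,
    sum_div, sum_div, mul_sum]
  refine (sum_le_sum fun u hu => ?_).trans
    (sum_le_sum_of_subset_of_nonneg (monotone_filter_right _ fun _ _ h => h.1) fun _ _ _ => by
      positivity)
  obtain ⟨hu3, -, hβ⟩ := mem_filter.mp hu
  obtain ⟨huB, hu⟩ := mem_powersetCard.mp hu3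
  refine (card_filter_superset_disjoint_div_le huB hu (hFB u) hk hkB).trans ?_
  gcongr

theorem expected_heavy_active_triples_bound_general
    (B : Finset (EuclideanSpace ℝ (Fin 2))) (m r r' : ℕ) (β : ℝ)
    (hB : B.card = m) (h2 : r = 2 * r') (hr' : 4 ≤ r') (hrm : r ≤ m)
    (c : Finset (EuclideanSpace ℝ (Fin 2)) → EuclideanSpace ℝ (Fin 2))
    (ρ : Finset (EuclideanSpace ℝ (Fin 2)) → ℝ) :
    (∑ R ∈ B.powersetCard r,
        (((B.powersetCard 3).filter (fun (u : Finset (EuclideanSpace ℝ (Fin 2))) =>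
            AffineIndependent ℝ (fun x : u => (x : EuclideanSpace ℝ (Fin 2))) ∧
            β ≤ ((B.filter (fun q => dist (c u) q < ρ u)).card : ℝ) ∧
            u ⊆ R ∧
            (B.filter (fun q => dist (c u) q < ρ u)) ∩ R = ∅)).card : ℝ)) /
      ((B.powersetCard r).card : ℝ)
    ≤ 64 * Real.exp (-((r : ℝ) * β) / (2 * (m : ℝ))) *
      ((∑ R' ∈ B.powersetCard r',
          (((B.powersetCard 3).filter (fun (u : Finset (EuclideanSpace ℝ (Fin 2))) =>
            AffineIndependent ℝ (fun x : u => (x : EuclideanSpace ℝ (Fin 2))) ∧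
            u ⊆ R' ∧
            (B.filter (fun q => dist (c u) q < ρ u)) ∩ R' = ∅)).card : ℝ)) /
        ((B.powersetCard r').card : ℝ)) := by
  subst hB h2
  have key := sum_card_heavy_active_div_le B
    (fun u => AffineIndependent ℝ (fun x : u => (x : EuclideanSpace ℝ (Fin 2))))
    (fun u => {q ∈ B | dist (c u) q < ρ u}) (fun _ => filter_subset _ _) β (k := r')
    (by omega) hrm
  rw [show -(((2 * r' : ℕ) : ℝ) * β) / (2 * #B) = -(r' * β / #B) by push_cast; ring]
  refine le_trans ?_ (key.trans ?_)
  · gcongr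
    exact disjoint_iff_inter_eq_empty.mpr
  · gcongr
    · norm_num
    · exact disjoint_iff_inter_eq_empty.mp

/-- Lemma 8 of the paper. The expected number of affinely
independent triples `u ⊆ B` with conflict size `b'_u ≥ β` that are active in a
uniformly random `r`-subset `R` of `B` is at most `64 e^{-rβ/(2m)}` times the
expected number of active triples for a uniformly random `r'`-subset `R'`,
where `r = 2r'`. Here `c u` and `ρ u` denote the circumcenter and circumradius
of the triple `u`, and expectations are expressed as averages over
`B.powersetCard r` (resp. `B.powersetCard r'`). -/
theorem expected_heavy_active_triples_bound
    (B : Finset (EuclideanSpace ℝ (Fin 2))) (m r r' : ℕ) (β : ℝ)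
    (hB : B.card = m) (h2 : r = 2 * r') (hr' : 4 ≤ r') (hrm : r ≤ m) (hβ : 0 ≤ β)
    (c : Finset (EuclideanSpace ℝ (Fin 2)) → EuclideanSpace ℝ (Fin 2))
    (ρ : Finset (EuclideanSpace ℝ (Fin 2)) → ℝ)
    (hc : ∀ u ∈ B.powersetCard 3,
      AffineIndependent ℝ (fun x : u => (x : EuclideanSpace ℝ (Fin 2))) →
      ∀ q ∈ u, dist (c u) q = ρ u) :
    (∑ R ∈ B.powersetCard r,
        (((B.powersetCard 3).filter (fun (u : Finset (EuclideanSpace ℝ (Fin 2))) =>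
            AffineIndependent ℝ (fun x : u => (x : EuclideanSpace ℝ (Fin 2))) ∧
            β ≤ ((B.filter (fun q => dist (c u) q < ρ u)).card : ℝ) ∧
            u ⊆ R ∧
            (B.filter (fun q => dist (c u) q < ρ u)) ∩ R = ∅)).card : ℝ)) /
      ((B.powersetCard r).card : ℝ)
    ≤ 64 * Real.exp (-((r : ℝ) * β) / (2 * (m : ℝ))) *
      ((∑ R' ∈ B.powersetCard r',
          (((B.powersetCard 3).filter (fun (u : Finset (EuclideanSpace ℝ (Fin 2))) =>
            AffineIndependent ℝ (fun x : u => (x : EuclideanSpace ℝ (Fin 2))) ∧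
            u ⊆ R' ∧
            (B.filter (fun q => dist (c u) q < ρ u)) ∩ R' = ∅)).card : ℝ)) /
        ((B.powersetCard r').card : ℝ)) :=
  expected_heavy_active_triples_bound_general B m r r' β hB h2 hr' hrm c ρ
end

section
/- Let S ⊆ ℝ² be a finite set, r ∈ S, and let v₁, v₂, v₃ ∈ ℝ² be points such that for each i and every q ∈ S, dist(vᵢ, r) ≤ dist(vᵢ, q) (i.e., r is a nearest site of S to each vᵢ). Let x be a point in the convex hull of {v₁, v₂, v₃}, and let ρ > 0 be such that dist(x, q) ≥ ρ for every q ∈ S (the open disk of radius ρ centered at x contains no point of S). Then the open disk {p ∈ ℝ² : dist(x, p) < ρ} is contained in the union over i ∈ {1, 2, 3} of the open disks {p ∈ ℝ² : dist(vᵢ, p) < dist(vᵢ, r)}. -/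
open scoped RealInnerProductSpace


/-- Lemma 9 of the paper. If `r ∈ S` is a nearest site of `S` to
each of `v₁, v₂, v₃`, `x` lies in the triangle spanned by `v₁, v₂, v₃`, and the
open disk of radius `ρ` around `x` contains no point of `S`, then this disk is
covered by the conflict disks of `v₁, v₂, v₃`. -/
theorem empty_disk_covered_by_conflict_disks
    (S : Finset (EuclideanSpace ℝ (Fin 2))) (r : EuclideanSpace ℝ (Fin 2)) (hr : r ∈ S)
    (v₁ v₂ v₃ : EuclideanSpace ℝ (Fin 2))
    (h₁ : ∀ q ∈ S, dist v₁ r ≤ dist v₁ q)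
    (h₂ : ∀ q ∈ S, dist v₂ r ≤ dist v₂ q)
    (h₃ : ∀ q ∈ S, dist v₃ r ≤ dist v₃ q)
    (x : EuclideanSpace ℝ (Fin 2))
    (hx : x ∈ convexHull ℝ ({v₁, v₂, v₃} : Set (EuclideanSpace ℝ (Fin 2))))
    (ρ : ℝ) (hρ : 0 < ρ) (hempty : ∀ q ∈ S, ρ ≤ dist x q) :
    {p : EuclideanSpace ℝ (Fin 2) | dist x p < ρ} ⊆
      {p : EuclideanSpace ℝ (Fin 2) | dist v₁ p < dist v₁ r} ∪
      {p : EuclideanSpace ℝ (Fin 2) | dist v₂ p < dist v₂ r} ∪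
      {p : EuclideanSpace ℝ (Fin 2) | dist v₃ p < dist v₃ r} := by
  intro p hp
  simp only [Set.mem_setOf_eq, Set.mem_union]
  by_contra hcon
  push_neg at hcon
  obtain ⟨⟨c1, c2⟩, c3⟩ := hcon
  -- the set of points at least as close to r as to p is a half-space
  have key : ∀ y : EuclideanSpace ℝ (Fin 2),
      dist y r ≤ dist y p ↔ ⟪p - r, y⟫ ≤ (‖p‖ ^ 2 - ‖r‖ ^ 2) / 2 := by
    intro y
    rw [dist_eq_norm, dist_eq_norm]
    rw [← pow_le_pow_iff_left₀ (norm_nonneg _) (norm_nonneg _) two_ne_zero]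
    rw [norm_sub_sq_real, norm_sub_sq_real, inner_sub_left,
      real_inner_comm y p, real_inner_comm y r]
    constructor <;> intro h <;> linarith
  have lin : IsLinearMap ℝ (fun y : EuclideanSpace ℝ (Fin 2) => ⟪p - r, y⟫) :=
    ⟨fun a b => inner_add_right _ _ _, fun c a => real_inner_smul_right _ _ _⟩
  have conv : Convex ℝ {y : EuclideanSpace ℝ (Fin 2) |
      ⟪p - r, y⟫ ≤ (‖p‖ ^ 2 - ‖r‖ ^ 2) / 2} := convex_halfSpace_le lin _
  have hsub : ({v₁, v₂, v₃} : Set (EuclideanSpace ℝ (Fin 2))) ⊆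
      {y | ⟪p - r, y⟫ ≤ (‖p‖ ^ 2 - ‖r‖ ^ 2) / 2} := by
    intro y hy
    rcases hy with h | h | h <;> subst h <;>
      simp only [Set.mem_setOf_eq, ← key] <;> assumption
  have hxC := convexHull_min hsub conv hx
  have hxr : dist x r ≤ dist x p := (key x).mpr hxC
  have hρr := hempty r hr
  have hp' : dist x p < ρ := hp
  linarith
end

section
/- Let S ⊆ ℝ² be a finite nonempty set, let R ⊆ S, and let r ∈ R. Let v₁, v₂, v₃ ∈ ℝ² be points such that for each i and every q ∈ R, dist(vᵢ, r) ≤ dist(vᵢ, q) (r is a nearest site of R to each vᵢ). For i = 1, 2, 3 define the conflict set Bᵢ = {q ∈ S : dist(vᵢ, q) < dist(vᵢ, r)}, and set B_Δ = {r} ∪ B₁ ∪ B₂ ∪ B₃. Then for every x in the convex hull of {v₁, v₂, v₃}, the minimum of dist(x, q) over q ∈ B_Δ equals the minimum of dist(x, q) over q ∈ S. -/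
open scoped Classical

open scoped RealInnerProductSpace in
lemma convex_dist_le_dist {E : Type*} [NormedAddCommGroup E] [InnerProductSpace ℝ E]
    (r q : E) : Convex ℝ {y : E | dist y r ≤ dist y q} := by
  have heq : {y : E | dist y r ≤ dist y q}
      = {y : E | ⟪y, q - r⟫ ≤ (‖q‖ ^ 2 - ‖r‖ ^ 2) / 2} := by
    ext y
    simp only [Set.mem_setOf_eq, dist_eq_norm]
    rw [← Real.sqrt_sq (norm_nonneg (y - r)), ← Real.sqrt_sq (norm_nonneg (y - q)),
      Real.sqrt_le_sqrt_iff (by positivity)]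
    have e1 : ‖y - r‖ ^ 2 = ‖y‖ ^ 2 - 2 * ⟪y, r⟫ + ‖r‖ ^ 2 := norm_sub_sq_real y r
    have e2 : ‖y - q‖ ^ 2 = ‖y‖ ^ 2 - 2 * ⟪y, q⟫ + ‖q‖ ^ 2 := norm_sub_sq_real y q
    rw [e1, e2, inner_sub_right]
    constructor <;> intro h <;> linarith
  rw [heq]
  exact convex_halfSpace_le
    ⟨fun a b => inner_add_left a b _, fun c a => real_inner_smul_left a _ c⟩ _

/-- Lemma 11 of the paper. If `r ∈ R ⊆ S` is a nearest site of
the sample `R` to each of `v₁, v₂, v₃`, then for every point `x` of the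
triangle spanned by `v₁, v₂, v₃`, the nearest-site distance from `x` to
`B_Δ = {r} ∪ B₁ ∪ B₂ ∪ B₃` (where `Bᵢ` is the conflict set of `vᵢ` with
respect to `S`) equals the nearest-site distance from `x` to all of `S`. -/
theorem voronoi_local_to_conflict_sets
    (S R : Finset (EuclideanSpace ℝ (Fin 2))) (hS : S.Nonempty) (hRS : R ⊆ S)
    (r : EuclideanSpace ℝ (Fin 2)) (hr : r ∈ R)
    (v₁ v₂ v₃ : EuclideanSpace ℝ (Fin 2))
    (h₁ : ∀ q ∈ R, dist v₁ r ≤ dist v₁ q)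
    (h₂ : ∀ q ∈ R, dist v₂ r ≤ dist v₂ q)
    (h₃ : ∀ q ∈ R, dist v₃ r ≤ dist v₃ q) :
    ∀ x ∈ convexHull ℝ ({v₁, v₂, v₃} : Set (EuclideanSpace ℝ (Fin 2))),
      (insert r ((S.filter (fun q => dist v₁ q < dist v₁ r)) ∪
                 (S.filter (fun q => dist v₂ q < dist v₂ r)) ∪
                 (S.filter (fun q => dist v₃ q < dist v₃ r)))).inf'
          (Finset.insert_nonempty _ _) (fun q => dist x q)
        = S.inf' hS (fun q => dist x q) := by
  intro x hx
  apply le_antisymm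
  · -- inf over B ≤ inf over S: show for each q ∈ S, inf B ≤ dist x q
    apply Finset.le_inf'
    intro q hq
    by_cases hcase : (dist v₁ r ≤ dist v₁ q) ∧ (dist v₂ r ≤ dist v₂ q) ∧
        (dist v₃ r ≤ dist v₃ q)
    · -- then dist x r ≤ dist x q by convexity
      obtain ⟨c1, c2, c3⟩ := hcase
      have hsub : ({v₁, v₂, v₃} : Set (EuclideanSpace ℝ (Fin 2)))
          ⊆ {y | dist y r ≤ dist y q} := by
        rintro y (rfl | rfl | rfl)
        · exact c1
        · exact c2
        · exact c3
      have hxq : dist x r ≤ dist x q :=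
        convexHull_min hsub (convex_dist_le_dist r q) hx
      exact le_trans (Finset.inf'_le _ (Finset.mem_insert_self r _)) hxq
    · push_neg at hcase
      have hmem : q ∈ (S.filter (fun q => dist v₁ q < dist v₁ r)) ∪
                 (S.filter (fun q => dist v₂ q < dist v₂ r)) ∪
                 (S.filter (fun q => dist v₃ q < dist v₃ r)) := by
        simp only [Finset.mem_union, Finset.mem_filter]
        by_cases h1 : dist v₁ r ≤ dist v₁ q
        · by_cases h2 : dist v₂ r ≤ dist v₂ q
          · exact Or.inr ⟨hq, hcase h1 h2⟩
          · exact Or.inl (Or.inr ⟨hq, not_le.mp h2⟩)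
        · exact Or.inl (Or.inl ⟨hq, not_le.mp h1⟩)
      exact Finset.inf'_le _ (Finset.mem_insert_of_mem hmem)
  · apply Finset.le_inf'
    intro b hb
    have hbS : b ∈ S := by
      rcases Finset.mem_insert.mp hb with h | h
      · exact h ▸ hRS hr
      · simp only [Finset.mem_union, Finset.mem_filter] at h
        rcases h with (⟨h, _⟩ | ⟨h, _⟩) | ⟨h, _⟩ <;> exact h
    exact Finset.inf'_le _ hbS
end

section
/- Let q_1, …, q_n ∈ ℝ² (n ≥ 2) be points with strictly increasing x-coordinates such that no three distinct points among them are collinear. Define the edge set of Part(S) on S = {q_1, …, q_n} to consist of (a) all chain edges {q_k, q_{k+1}} for 1 ≤ k < n, and (b) all convex hull edges, i.e., pairs {q_i, q_j} such that there is a closed half-plane containing S whose boundary line contains q_i and q_j. Then every point q_k is contained in at most 4 edges of Part(S). -/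
/-!
Each point has at most two chain neighbours, since the chain is x-monotone, and at most two
convex hull neighbours. For the latter, suppose `x` had three hull neighbours `p₀, p₁, p₂`, with
supporting affine functionals `fᵢ` vanishing at `x` and `pᵢ`. By general position `fᵢ(pⱼ) < 0`
for `i ≠ j`. Put `vᵢ = pᵢ - x`; then `v₀, v₁` is a basis of the plane, and writing
`v₂ = a v₀ + b v₁`, the functionals `f₁` and `f₀` force `a, b > 0`, so that
`0 = f₂(p₂) = a f₂(p₀) + b f₂(p₁) < 0`.
-/

open Module Set

section Plane

variable {V P : Type*} [AddCommGroup V] [Module ℝ V] [AddTorsor V P]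

theorem not_forall_apply_neg_of_finrank_eq_two (hV : finrank ℝ V = 2) (v : Fin 3 → V)
    (g : Fin 3 → Dual ℝ V) (hzero : ∀ i, g i (v i) = 0) :
    ¬ ∀ i j, i ≠ j → g i (v j) < 0 := by
  intro hneg
  have h01 := hneg 0 1 (by decide)
  have h02 := hneg 0 2 (by decide)
  have h10 := hneg 1 0 (by decide)
  have h12 := hneg 1 2 (by decide)
  have h20 := hneg 2 0 (by decide)
  have h21 := hneg 2 1 (by decide)
  have hli : LinearIndependent ℝ ![v 0, v 1] := by
    refine LinearIndependent.pair_iff.2 fun s t hst => ?_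
    have h0 := congrArg (g 0) hst
    have h1 := congrArg (g 1) hst
    simp only [map_add, map_smul, smul_eq_mul, hzero, mul_zero, zero_add, add_zero,
      map_zero] at h0 h1
    exact ⟨(mul_eq_zero.1 h1).resolve_right h10.ne, (mul_eq_zero.1 h0).resolve_right h01.ne⟩
  obtain ⟨c, hc⟩ := (Submodule.mem_span_range_iff_exists_fun ℝ).1
    ((hli.span_eq_top_of_card_eq_finrank (by simp [hV])).symm ▸ Submodule.mem_top (x := v 2))
  simp only [Fin.sum_univ_two, Matrix.cons_val_zero, Matrix.cons_val_one] at hc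
  have hg : ∀ i, g i (v 2) = c 0 * g i (v 0) + c 1 * g i (v 1) := fun i => by
    rw [← hc]; simp
  have hc1 : 0 < c 1 := by
    have := hg 0; rw [hzero] at this; nlinarith
  have hc0 : 0 < c 0 := by
    have := hg 1; rw [hzero] at this; nlinarith
  have := hg 2
  rw [hzero] at this
  nlinarith [mul_pos hc0 (neg_pos.2 h20), mul_pos hc1 (neg_pos.2 h21)]

theorem collinear_of_forall_mem_eq_zero (hV : finrank ℝ V = 2) (f : P →ᵃ[ℝ] ℝ)
    (hf : f.linear ≠ 0) {s : Set P} (hs : ∀ p ∈ s, f p = 0) : Collinear ℝ s := by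
  have : FiniteDimensional ℝ V := .of_finrank_pos (by omega)
  have hle : vectorSpan ℝ s ≤ LinearMap.ker f.linear := by
    rw [vectorSpan_def, Submodule.span_le]
    rintro _ ⟨p, hp, p', hp', rfl⟩
    simp [hs p hp, hs p' hp']
  have hker := Dual.finrank_ker_add_one_of_ne_zero hf
  rw [collinear_iff_finrank_le_one]
  have := Submodule.finrank_mono hle
  omega

def NoThreeCollinear (S : Set P) : Prop :=
  ∀ a ∈ S, ∀ b ∈ S, ∀ c ∈ S, a ≠ b → a ≠ c → b ≠ c → ¬ Collinear ℝ ({a, b, c} : Set P)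

def IsHullEdge (S : Set P) (a b : P) : Prop :=
  a ≠ b ∧ ∃ f : P →ᵃ[ℝ] ℝ, f.linear ≠ 0 ∧ (∀ s ∈ S, f s ≤ 0) ∧ f a = 0 ∧ f b = 0

theorem IsHullEdge.symm {S : Set P} {a b : P} (h : IsHullEdge S a b) : IsHullEdge S b a := by
  obtain ⟨hab, f, hf, hfS, hfa, hfb⟩ := h
  exact ⟨hab.symm, f, hf, hfS, hfb, hfa⟩

theorem IsHullEdge.exists_eq_pair [DecidableEq P] {S : Set P} {a b x : P}
    (h : IsHullEdge S a b) (ha : a ∈ S) (hb : b ∈ S) (hx : x ∈ ({a, b} : Finset P)) :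
    ∃ p ∈ S, IsHullEdge S x p ∧ ({a, b} : Finset P) = {x, p} := by
  rcases Finset.mem_insert.1 hx with rfl | hx
  · exact ⟨b, hb, h, rfl⟩
  · rw [Finset.mem_singleton.1 hx]
    exact ⟨a, ha, h.symm, Finset.pair_comm _ _⟩

theorem NoThreeCollinear.apply_neg_of_apply_eq_zero (hV : finrank ℝ V = 2) {S : Set P}
    (hS : NoThreeCollinear S) {f : P →ᵃ[ℝ] ℝ} (hf : f.linear ≠ 0) (hfS : ∀ s ∈ S, f s ≤ 0)
    {a b y : P} (ha : a ∈ S) (hb : b ∈ S) (hy : y ∈ S) (hab : a ≠ b) (hay : a ≠ y) (hby : b ≠ y)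
    (hfa : f a = 0) (hfb : f b = 0) : f y < 0 :=
  (hfS y hy).lt_of_ne fun hfy => hS a ha b hb y hy hab hay hby <|
    collinear_of_forall_mem_eq_zero hV f hf (by simp [hfa, hfb, hfy])

theorem NoThreeCollinear.ncard_setOf_isHullEdge_le_two (hV : finrank ℝ V = 2) {S : Set P}
    (hS : NoThreeCollinear S) {x : P} (hx : x ∈ S) :
    {p ∈ S | IsHullEdge S x p}.ncard ≤ 2 := by
  by_contra! h
  obtain ⟨a, ha, b, hb, c, hc, hab, hac, hbc⟩ :=
    (two_lt_ncard (finite_of_ncard_pos (by omega))).1 h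
  set p : Fin 3 → P := ![a, b, c]
  have hp : ∀ i, p i ∈ S ∧ IsHullEdge S x (p i) := by
    intro i; fin_cases i <;> assumption
  have hinj : ∀ i j, i ≠ j → p i ≠ p j := by
    intro i j
    fin_cases i <;> fin_cases j <;> simp [p, hab, hac, hbc, hab.symm, hac.symm, hbc.symm]
  choose hpS hxp f hf hfS hfx hfp using hp
  refine not_forall_apply_neg_of_finrank_eq_two hV (fun i => p i -ᵥ x) (fun i => (f i).linear)
    (fun i => by simp [hfx, hfp]) fun i j hij => ?_
  simp only [AffineMap.linearMap_vsub, hfx, vsub_eq_sub, sub_zero]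
  exact hS.apply_neg_of_apply_eq_zero hV (hf i) (hfS i) hx (hpS i) (hpS j) (hxp i) (hxp j)
    (hinj i j hij) (hfx i) (hfp i)

end Plane

theorem injOn_Icc_of_lt_succ {α β : Type*} [Preorder β] (φ : α → β) {q : ℕ → α} {n : ℕ}
    (h : ∀ k, 1 ≤ k → k < n → φ (q k) < φ (q (k + 1))) : InjOn q (Icc 1 n) := by
  have hmono : StrictMonoOn (φ ∘ q) (Icc 1 n) := by
    refine strictMonoOn_of_lt_succ ordConnected_Icc fun a _ ha hsa => ?_
    simp only [Order.succ_eq_add_one, mem_Icc] at ha hsa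
    exact h a ha.1 (by omega)
  exact hmono.injOn.of_comp

theorem pair_succ_mem_of_injOn {α : Type*} [DecidableEq α] {q : ℕ → α} {n k a : ℕ}
    (hinj : InjOn q (Icc 1 n)) (hk : k ∈ Icc 1 n) (ha : 1 ≤ a) (han : a < n)
    (hmem : q k ∈ ({q a, q (a + 1)} : Finset α)) :
    ({q a, q (a + 1)} : Finset α) ∈ ({{q (k - 1), q k}, {q k, q (k + 1)}} : Set (Finset α)) := by
  rcases Finset.mem_insert.1 hmem with h | h
  · rw [hinj hk ⟨ha, han.le⟩ h]; simp
  · rw [hinj hk ⟨by omega, han⟩ (Finset.mem_singleton.1 h)]; simp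

theorem part_degree_at_most_four_general
    (n : ℕ) (q : ℕ → EuclideanSpace ℝ (Fin 2))
    (hx : ∀ k, 1 ≤ k → k < n → q k 0 < q (k + 1) 0)
    (hcol : ∀ i j l, 1 ≤ i → i ≤ n → 1 ≤ j → j ≤ n → 1 ≤ l → l ≤ n →
      q i ≠ q j → q i ≠ q l → q j ≠ q l →
      ¬ Collinear ℝ ({q i, q j, q l} : Set (EuclideanSpace ℝ (Fin 2)))) :
    ∀ k, 1 ≤ k → k ≤ n →
      Set.ncard {e : Finset (EuclideanSpace ℝ (Fin 2)) |
        ((∃ a, 1 ≤ a ∧ a < n ∧ e = {q a, q (a + 1)}) ∨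
          (∃ i j, 1 ≤ i ∧ i ≤ n ∧ 1 ≤ j ∧ j ≤ n ∧ q i ≠ q j ∧ e = {q i, q j} ∧
            ∃ f : EuclideanSpace ℝ (Fin 2) →ᵃ[ℝ] ℝ, f.linear ≠ 0 ∧
              (∀ l, 1 ≤ l → l ≤ n → f (q l) ≤ 0) ∧ f (q i) = 0 ∧ f (q j) = 0)) ∧
        q k ∈ e} ≤ 4 := by
  intro k hk1 hk2
  set S := q '' Icc 1 n
  have hV : finrank ℝ (EuclideanSpace ℝ (Fin 2)) = 2 := finrank_euclideanSpace_fin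
  have hinj : InjOn q (Icc 1 n) := injOn_Icc_of_lt_succ (· 0) hx
  have hS : NoThreeCollinear S := by
    rintro _ ⟨i, hi, rfl⟩ _ ⟨j, hj, rfl⟩ _ ⟨l, hl, rfl⟩
    exact hcol i j l hi.1 hi.2 hj.1 hj.2 hl.1 hl.2
  have hk : q k ∈ S := mem_image_of_mem q ⟨hk1, hk2⟩
  have hfin : {p ∈ S | IsHullEdge S (q k) p}.Finite :=
    ((finite_Icc 1 n).image q).subset (sep_subset _ _)
  set chain : Set (Finset (EuclideanSpace ℝ (Fin 2))) := {{q (k - 1), q k}, {q k, q (k + 1)}}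
  set hull := (fun p => ({q k, p} : Finset _)) '' {p ∈ S | IsHullEdge S (q k) p}
  have hcard : (chain ∪ hull).ncard ≤ 4 :=
    calc (chain ∪ hull).ncard ≤ chain.ncard + hull.ncard := ncard_union_le _ _
      _ ≤ 2 + 2 := add_le_add ((ncard_insert_le _ _).trans (by simp))
          ((ncard_image_le hfin).trans (hS.ncard_setOf_isHullEdge_le_two hV hk))
  refine (ncard_le_ncard ?_ ((toFinite _).union (hfin.image _))).trans hcard
  rintro e ⟨⟨a, ha1, han, rfl⟩ | ⟨i, j, hi1, hi2, hj1, hj2, hij, rfl, f, hf, hfS, hfi, hfj⟩, hke⟩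
  · exact Or.inl (pair_succ_mem_of_injOn hinj ⟨hk1, hk2⟩ ha1 han hke)
  · obtain ⟨p, hpS, hp, he⟩ := IsHullEdge.exists_eq_pair (S := S)
      ⟨hij, f, hf, forall_mem_image.2 fun l hl => hfS l hl.1 hl.2, hfi, hfj⟩
      (mem_image_of_mem q ⟨hi1, hi2⟩) (mem_image_of_mem q ⟨hj1, hj2⟩) hke
    exact Or.inr ⟨p, ⟨hpS, hp⟩, he.symm⟩

/-- Degree bound from Lemma 1 of the paper. For points
`q_1, …, q_n` in general position with strictly increasing `x`-coordinates,
every point lies in at most 4 edges of `Part(S)`: the chain edges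
`{q_k, q_{k+1}}` together with the convex-hull edges (pairs lying on the
boundary line of a closed half-plane containing all the points). -/
theorem part_degree_at_most_four
    (n : ℕ) (hn : 2 ≤ n) (q : ℕ → EuclideanSpace ℝ (Fin 2))
    (hx : ∀ k, 1 ≤ k → k < n → q k 0 < q (k + 1) 0)
    (hcol : ∀ i j l, 1 ≤ i → i ≤ n → 1 ≤ j → j ≤ n → 1 ≤ l → l ≤ n →
      q i ≠ q j → q i ≠ q l → q j ≠ q l →
      ¬ Collinear ℝ ({q i, q j, q l} : Set (EuclideanSpace ℝ (Fin 2)))) :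
    ∀ k, 1 ≤ k → k ≤ n →
      Set.ncard {e : Finset (EuclideanSpace ℝ (Fin 2)) |
        ((∃ a, 1 ≤ a ∧ a < n ∧ e = {q a, q (a + 1)}) ∨
          (∃ i j, 1 ≤ i ∧ i ≤ n ∧ 1 ≤ j ∧ j ≤ n ∧ q i ≠ q j ∧ e = {q i, q j} ∧
            ∃ f : EuclideanSpace ℝ (Fin 2) →ᵃ[ℝ] ℝ, f.linear ≠ 0 ∧
              (∀ l, 1 ≤ l → l ≤ n → f (q l) ≤ 0) ∧ f (q i) = 0 ∧ f (q j) = 0)) ∧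
        q k ∈ e} ≤ 4 :=
  part_degree_at_most_four_general n q hx hcol
end
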